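/- Let $\phi\in\mathbb{B}^+$, $\rho>0$ and $h\in\mathbb{B}^+$ satisfy $P_\phi h=\rho h$ pointwise, and define the normalized weights $u_i(x)=\phi(\tau_i(x))h(\tau_i(x))/(\rho h(x))$ for $i=0,\dots,d-1$. Let $\hat{\nu}_0$ be a holonomic probability on $[0,1]\times\Sigma$ whose projection $\nu_0=\pi_*\hat{\nu}_0$ to $[0,1]$ (where $\pi(x,w)=x$) satisfies $\int\sum_{i=0}^{d-1}u_i(x)f(\tau_i(x))\,d\nu_0(x)=\int f\,d\nu_0$ for every continuous $f:[0,1]\to\mathbb{R}$. Then $\hat{\nu}_0$ is an equilibrium state for $\phi$: $h(\hat{\nu}_0)+\int\ln\phi\,d\hat{\nu}_0=\ln\rho$. -/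

import Mathlib

/-!
Write `u i` for the normalized weights, `T g = ∑ i, u i * g ∘ τ i` for the normalized transfer
operator and `ν` for the projection of `ν̂₀`. The hypothesis says `∫ T g ∂ν = ∫ g ∂ν` for
continuous `g`; it identifies `ν` with the measure `∑ i, (τ i)_* (u i • ν)`, which extends the
identity to all integrable `g`. For `f ∈ 𝔹⁺` put `q = f / (φ h)`. Jensen's inequality for `log`
with the weights `u i x` gives
`log ((∑ i, f (τ i x)) / f x) ≥ log ρ - log φ x + (T (log q) x - log q x)`,
with equality for `f = φ h`. The bracket integrates to zero, so the infimum defining the entropy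
is attained at `φ h` and equals `log ρ - ∫ log φ ∂ν`.
-/

open MeasureTheory

noncomputable section

/-- `f ∈ 𝔹⁺` : Borel measurable and bounded away from `0` and `∞`. -/
def MemBplus (f : unitInterval → ℝ) : Prop :=
  Measurable f ∧ ∃ c C : ℝ, 0 < c ∧ (∀ x, c ≤ f x) ∧ (∀ x, f x ≤ C)

/-- A probability on `[0,1] × Σ` is holonomic. -/
def IsHolonomic {d : ℕ} (τ : Fin d → unitInterval → unitInterval)
    (ν : Measure (unitInterval × (ℕ → Fin d))) : Prop :=
  ∀ f : C(unitInterval, ℝ), (∫ p, f (τ (p.2 0) p.1) ∂ν) = ∫ p, f p.1 ∂ν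

/-- The entropy of a holonomic probability. -/
def entropy {d : ℕ} (τ : Fin d → unitInterval → unitInterval)
    (nuhat : Measure (unitInterval × (ℕ → Fin d))) : ℝ :=
  sInf {r : ℝ | ∃ f : unitInterval → ℝ, MemBplus f ∧
    r = ∫ p, Real.log ((∑ i : Fin d, f (τ i p.1)) / f p.1) ∂nuhat}

open Finset
open scoped BoundedContinuousFunction

variable {ι X : Type*}

theorem Real.sum_mul_log_div_le_log_sum [Fintype ι] {u a : ι → ℝ} (hu : ∀ i, 0 < u i)
    (hu_sum : ∑ i, u i = 1) (ha : ∀ i, 0 < a i) :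
    ∑ i, u i * Real.log (a i / u i) ≤ Real.log (∑ i, a i) := by
  have h := strictConcaveOn_log_Ioi.concaveOn.le_map_sum (t := univ) (p := fun i => a i / u i)
    (fun i _ => (hu i).le) hu_sum (fun i _ => div_pos (ha i) (hu i))
  simpa only [smul_eq_mul, mul_div_cancel₀ _ (hu _).ne'] using h

section Pushforward

variable [MeasurableSpace X] {Y : Type*} [MeasurableSpace Y] {ν : Measure X} {u : X → ℝ}
  {τ : X → Y} {g : Y → ℝ}

theorem integral_map_withDensity_ofReal (hu : AEMeasurable u ν) (hu0 : 0 ≤ u)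
    (hτ : Measurable τ)
    (hg : AEStronglyMeasurable g ((ν.withDensity fun x => ENNReal.ofReal (u x)).map τ)) :
    ∫ y, g y ∂(ν.withDensity fun x => ENNReal.ofReal (u x)).map τ = ∫ x, u x * g (τ x) ∂ν := by
  rw [integral_map hτ.aemeasurable hg, integral_withDensity_eq_integral_toReal_smul₀
    hu.ennreal_ofReal (ae_of_all _ fun _ => ENNReal.ofReal_lt_top)]
  simp only [ENNReal.toReal_ofReal (hu0 _), smul_eq_mul]

theorem integrable_map_withDensity_ofReal_iff (hu : AEMeasurable u ν) (hu0 : 0 ≤ u)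
    (hτ : Measurable τ)
    (hg : AEStronglyMeasurable g ((ν.withDensity fun x => ENNReal.ofReal (u x)).map τ)) :
    Integrable g ((ν.withDensity fun x => ENNReal.ofReal (u x)).map τ) ↔
      Integrable (fun x => u x * g (τ x)) ν := by
  rw [integrable_map_measure hg hτ.aemeasurable, integrable_withDensity_iff_integrable_smul₀'
    hu.ennreal_ofReal (ae_of_all _ fun _ => ENNReal.ofReal_lt_top)]
  simp only [Function.comp_def, ENNReal.toReal_ofReal (hu0 _), smul_eq_mul]

end Pushforward

section TransferOperator

variable [Fintype ι] [MeasurableSpace X]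

def transferOp (u : ι → X → ℝ) (τ : ι → X → X) (g : X → ℝ) (x : X) : ℝ :=
  ∑ i, u i x * g (τ i x)

variable [TopologicalSpace X] [HasOuterApproxClosed X] [BorelSpace X]
  {ν : Measure X} [IsFiniteMeasure ν] {u : ι → X → ℝ} {τ : ι → X → X}

theorem sum_map_withDensity_ofReal_eq (hu : ∀ i, Integrable (u i) ν) (hu0 : ∀ i, 0 ≤ u i)
    (hτ : ∀ i, Measurable (τ i))
    (hν : ∀ f : X →ᵇ ℝ, ∫ x, transferOp u τ f x ∂ν = ∫ x, f x ∂ν) :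
    ∑ i, (ν.withDensity fun x => ENNReal.ofReal (u i x)).map (τ i) = ν := by
  have := fun i => isFiniteMeasure_withDensity_ofReal (hu i).2
  refine ext_of_forall_integral_eq_of_IsFiniteMeasure fun f => ?_
  have hf_bdd : ∀ i, ∀ᵐ x ∂ν, ‖f (τ i x)‖ ≤ ‖f‖ := fun i =>
    ae_of_all _ fun x => f.norm_coe_le_norm _
  rw [integral_finsetSum_measure fun i _ => f.integrable _, ← hν f]
  unfold transferOp
  rw [integral_finsetSum _ fun i _ => ?_]
  · refine sum_congr rfl fun i _ => ?_
    exact integral_map_withDensity_ofReal (hu i).aemeasurable (hu0 i) (hτ i)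
      f.continuous.aestronglyMeasurable
  · simpa only [Function.comp_apply, mul_comm (u i _)] using
      (hu i).bdd_mul (f.continuous.measurable.comp (hτ i)).aestronglyMeasurable (hf_bdd i)

theorem integrable_mul_comp_of_integral_transferOp_eq (hu : ∀ i, Integrable (u i) ν)
    (hu0 : ∀ i, 0 ≤ u i) (hτ : ∀ i, Measurable (τ i))
    (hν : ∀ f : X →ᵇ ℝ, ∫ x, transferOp u τ f x ∂ν = ∫ x, f x ∂ν) {g : X → ℝ}
    (hg : Integrable g ν) (i : ι) : Integrable (fun x => u i x * g (τ i x)) ν := by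
  rw [← sum_map_withDensity_ofReal_eq hu hu0 hτ hν, integrable_finsetSum_measure] at hg
  have hgi := hg i (mem_univ i)
  exact (integrable_map_withDensity_ofReal_iff (hu i).aemeasurable (hu0 i) (hτ i) hgi.1).1 hgi

theorem integrable_transferOp (hu : ∀ i, Integrable (u i) ν) (hu0 : ∀ i, 0 ≤ u i)
    (hτ : ∀ i, Measurable (τ i))
    (hν : ∀ f : X →ᵇ ℝ, ∫ x, transferOp u τ f x ∂ν = ∫ x, f x ∂ν) {g : X → ℝ}
    (hg : Integrable g ν) : Integrable (transferOp u τ g) ν :=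
  integrable_finsetSum _ fun i _ =>
    integrable_mul_comp_of_integral_transferOp_eq hu hu0 hτ hν hg i

theorem integral_transferOp (hu : ∀ i, Integrable (u i) ν) (hu0 : ∀ i, 0 ≤ u i)
    (hτ : ∀ i, Measurable (τ i))
    (hν : ∀ f : X →ᵇ ℝ, ∫ x, transferOp u τ f x ∂ν = ∫ x, f x ∂ν) {g : X → ℝ}
    (hg : Integrable g ν) : ∫ x, transferOp u τ g x ∂ν = ∫ x, g x ∂ν := by
  have hsum := sum_map_withDensity_ofReal_eq hu hu0 hτ hν
  have hgi : ∀ i ∈ univ, Integrable g ((ν.withDensity fun x => ENNReal.ofReal (u i x)).map (τ i)) :=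
    integrable_finsetSum_measure.1 (by rwa [hsum])
  unfold transferOp
  rw [integral_finsetSum _ fun i _ =>
      integrable_mul_comp_of_integral_transferOp_eq hu hu0 hτ hν hg i]
  conv_rhs => rw [← hsum, integral_finsetSum_measure hgi]
  exact sum_congr rfl fun i hi =>
    (integral_map_withDensity_ofReal (hu i).aemeasurable (hu0 i) (hτ i) (hgi i hi).1).symm

end TransferOperator

namespace MemBplus

variable {f g : unitInterval → ℝ}

theorem pos (hf : MemBplus f) (x : unitInterval) : 0 < f x := by
  obtain ⟨-, c, -, hc, hcf, -⟩ := hf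
  exact hc.trans_le (hcf x)

theorem mul (hf : MemBplus f) (hg : MemBplus g) : MemBplus fun x => f x * g x := by
  obtain ⟨hfm, c, C, hc, hcf, hfC⟩ := hf
  obtain ⟨hgm, c', C', hc', hcg, hgC'⟩ := hg
  refine ⟨hfm.mul hgm, c * c', C * C', mul_pos hc hc', fun x => ?_, fun x => ?_⟩
  · exact mul_le_mul (hcf x) (hcg x) hc'.le (hc.le.trans (hcf x))
  · exact mul_le_mul (hfC x) (hgC' x) (hc'.le.trans (hcg x)) ((hc.le.trans (hcf x)).trans (hfC x))

theorem div (hf : MemBplus f) (hg : MemBplus g) : MemBplus fun x => f x / g x := by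
  obtain ⟨hfm, c, C, hc, hcf, hfC⟩ := hf
  obtain ⟨hgm, c', C', hc', hcg, hgC'⟩ := hg
  have hC' : 0 < C' := hc'.trans_le ((hcg 0).trans (hgC' 0))
  refine ⟨hfm.div hgm, c / C', C / c', div_pos hc hC', fun x => ?_, fun x => ?_⟩
  · exact div_le_div₀ (hc.le.trans (hcf x)) (hcf x) (hc'.trans_le (hcg x)) (hgC' x)
  · exact div_le_div₀ ((hc.le.trans (hcf x)).trans (hfC x)) (hfC x) hc' (hcg x)

theorem sum_comp [Fintype ι] [Nonempty ι] {τ : ι → unitInterval → unitInterval}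
    (hτ : ∀ i, Measurable (τ i)) (hf : MemBplus f) : MemBplus fun x => ∑ i, f (τ i x) := by
  obtain ⟨hfm, c, C, hc, hcf, hfC⟩ := hf
  refine ⟨Finset.measurable_sum _ fun i _ => hfm.comp (hτ i), Fintype.card ι * c,
    Fintype.card ι * C, by positivity, fun x => ?_, fun x => ?_⟩
  · simpa using card_nsmul_le_sum univ (fun i => f (τ i x)) c fun i _ => hcf _
  · simpa using sum_le_card_nsmul univ (fun i => f (τ i x)) C fun i _ => hfC _

theorem integrable_log (hf : MemBplus f) (μ : Measure unitInterval) [IsFiniteMeasure μ] :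
    Integrable (fun x => Real.log (f x)) μ := by
  obtain ⟨hfm, c, C, hc, hcf, hfC⟩ := hf
  refine .of_mem_Icc (Real.log c) (Real.log C) (Real.measurable_log.comp hfm).aemeasurable
    (ae_of_all _ fun x => ⟨?_, ?_⟩)
  · exact Real.log_le_log hc (hcf x)
  · exact Real.log_le_log (hc.trans_le (hcf x)) (hfC x)

end MemBplus

theorem entropy_eq_sInf_integral_map_fst {d : ℕ} {τ : Fin d → unitInterval → unitInterval}
    (hτ : ∀ i, Measurable (τ i)) (ν : Measure (unitInterval × (ℕ → Fin d))) :
    entropy τ ν = sInf {r : ℝ | ∃ f : unitInterval → ℝ, MemBplus f ∧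
      r = ∫ x, Real.log ((∑ i, f (τ i x)) / f x) ∂ν.map Prod.fst} := by
  unfold entropy
  congr 1
  ext r
  refine exists_congr fun f => and_congr_right fun hf => ?_
  have hm : Measurable fun x => Real.log ((∑ i, f (τ i x)) / f x) :=
    Real.measurable_log.comp ((Finset.measurable_sum _ fun i _ => hf.1.comp (hτ i)).div hf.1)
  rw [integral_map measurable_fst.aemeasurable hm.aestronglyMeasurable]

section Eigenfunction

def normalizedWeight (τ : ι → X → X) (φ h : X → ℝ) (ρ : ℝ) (i : ι) (x : X) : ℝ :=
  φ (τ i x) * h (τ i x) / (ρ * h x)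

variable {τ : ι → X → X} {φ h : X → ℝ} {ρ : ℝ}

theorem normalizedWeight_pos (hφ : ∀ x, 0 < φ x) (hh : ∀ x, 0 < h x) (hρ : 0 < ρ) (i : ι)
    (x : X) : 0 < normalizedWeight τ φ h ρ i x :=
  div_pos (mul_pos (hφ _) (hh _)) (mul_pos hρ (hh x))

theorem measurable_normalizedWeight [MeasurableSpace X] (hτ : ∀ i, Measurable (τ i))
    (hφ : Measurable φ) (hh : Measurable h) (i : ι) :
    Measurable (normalizedWeight τ φ h ρ i) :=
  ((hφ.comp (hτ i)).mul (hh.comp (hτ i))).div (measurable_const.mul hh)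

variable [Fintype ι]

theorem sum_normalizedWeight (hh : ∀ x, 0 < h x) (hρ : 0 < ρ)
    (heig : ∀ x, ∑ i, φ (τ i x) * h (τ i x) = ρ * h x) (x : X) :
    ∑ i, normalizedWeight τ φ h ρ i x = 1 := by
  simp only [normalizedWeight]
  rw [← sum_div, heig, div_self (mul_pos hρ (hh x)).ne']

theorem normalizedWeight_le_one (hφ : ∀ x, 0 < φ x) (hh : ∀ x, 0 < h x) (hρ : 0 < ρ)
    (heig : ∀ x, ∑ i, φ (τ i x) * h (τ i x) = ρ * h x) (i : ι) (x : X) :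
    normalizedWeight τ φ h ρ i x ≤ 1 :=
  sum_normalizedWeight hh hρ heig x ▸ single_le_sum
    (fun j _ => (normalizedWeight_pos hφ hh hρ j x).le) (mem_univ i)

theorem le_log_sum_comp_div (hφ : ∀ x, 0 < φ x) (hh : ∀ x, 0 < h x) (hρ : 0 < ρ)
    (heig : ∀ x, ∑ i, φ (τ i x) * h (τ i x) = ρ * h x) {f : X → ℝ} (hf : ∀ x, 0 < f x) (x : X) :
    Real.log ρ - Real.log (φ x) +
        (transferOp (normalizedWeight τ φ h ρ) τ (fun y => Real.log (f y / (φ y * h y))) x -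
          Real.log (f x / (φ x * h x))) ≤
      Real.log ((∑ i, f (τ i x)) / f x) := by
  have hu_sum := sum_normalizedWeight hh hρ heig x
  have hgibbs := Real.sum_mul_log_div_le_log_sum (fun i => normalizedWeight_pos hφ hh hρ i x)
    hu_sum (fun i => hf (τ i x))
  set u := normalizedWeight τ φ h ρ
  have hlog_div :
      Real.log (f x / (φ x * h x)) = Real.log (f x) - Real.log (φ x) - Real.log (h x) := by
    rw [Real.log_div (hf x).ne' (mul_pos (hφ x) (hh x)).ne', Real.log_mul (hφ x).ne' (hh x).ne']
    ring
  have hterm : ∀ i, Real.log (f (τ i x) / u i x) =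
      Real.log ρ + Real.log (h x) + Real.log (f (τ i x) / (φ (τ i x) * h (τ i x))) := by
    intro i
    have hu : f (τ i x) / u i x = (ρ * h x) * (f (τ i x) / (φ (τ i x) * h (τ i x))) := by
      simp only [u, normalizedWeight]
      field_simp [(hφ (τ i x)).ne', (hh (τ i x)).ne', (hh x).ne']
    rw [hu, Real.log_mul (mul_pos hρ (hh x)).ne' (div_pos (hf _) (mul_pos (hφ _) (hh _))).ne',
      Real.log_mul hρ.ne' (hh x).ne']
  simp only [hterm, mul_add, sum_add_distrib, ← sum_mul, hu_sum, one_mul] at hgibbs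
  have hι : (univ : Finset ι).Nonempty := nonempty_of_sum_ne_zero (hu_sum ▸ one_ne_zero)
  rw [Real.log_div (sum_pos (fun i _ => hf _) hι).ne' (hf x).ne', hlog_div]
  unfold transferOp
  linarith

theorem log_sum_comp_div_eq (hφ : ∀ x, 0 < φ x) (hh : ∀ x, 0 < h x) (hρ : 0 < ρ)
    (heig : ∀ x, ∑ i, φ (τ i x) * h (τ i x) = ρ * h x) (x : X) :
    Real.log ((∑ i, φ (τ i x) * h (τ i x)) / (φ x * h x)) = Real.log ρ - Real.log (φ x) := by
  rw [heig, mul_div_mul_right _ _ (hh x).ne', Real.log_div hρ.ne' (hφ x).ne']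

end Eigenfunction

theorem isLeast_integral_log_sum_comp_div [Fintype ι] {τ : ι → unitInterval → unitInterval}
    {φ h : unitInterval → ℝ} {ρ : ℝ} (hτ : ∀ i, Measurable (τ i)) (hφ : MemBplus φ)
    (hh : MemBplus h) (hρ : 0 < ρ) (heig : ∀ x, ∑ i, φ (τ i x) * h (τ i x) = ρ * h x)
    {ν : Measure unitInterval} [IsProbabilityMeasure ν]
    (hν_int : ∀ g, Integrable g ν → Integrable (transferOp (normalizedWeight τ φ h ρ) τ g) ν)
    (hν : ∀ g, Integrable g ν →
      ∫ x, transferOp (normalizedWeight τ φ h ρ) τ g x ∂ν = ∫ x, g x ∂ν) :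
    IsLeast {r : ℝ | ∃ f : unitInterval → ℝ, MemBplus f ∧
        r = ∫ x, Real.log ((∑ i, f (τ i x)) / f x) ∂ν}
      (Real.log ρ - ∫ x, Real.log (φ x) ∂ν) := by
  have hlogφ := hφ.integrable_log ν
  refine ⟨⟨fun x => φ x * h x, hφ.mul hh, ?_⟩, ?_⟩
  · simp_rw [log_sum_comp_div_eq hφ.pos hh.pos hρ heig]
    rw [integral_sub (integrable_const _) hlogφ, integral_const, probReal_univ, one_smul]
  rintro _ ⟨f, hf, rfl⟩
  have : Nonempty ι := univ_nonempty_iff.1 <| nonempty_of_sum_ne_zero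
    ((sum_normalizedWeight hh.pos hρ heig 0).symm ▸ one_ne_zero)
  set q : unitInterval → ℝ := fun y => Real.log (f y / (φ y * h y))
  have hq : Integrable q ν := (hf.div (hφ.mul hh)).integrable_log ν
  have hmain : Integrable (fun x => Real.log ρ - Real.log (φ x)) ν :=
    (integrable_const _).sub hlogφ
  have hcob : Integrable (fun x => transferOp (normalizedWeight τ φ h ρ) τ q x - q x) ν :=
    (hν_int q hq).sub hq
  calc Real.log ρ - ∫ x, Real.log (φ x) ∂ν
      = ∫ x, Real.log ρ - Real.log (φ x) +
          (transferOp (normalizedWeight τ φ h ρ) τ q x - q x) ∂ν := by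
        rw [integral_add hmain hcob, integral_sub (hν_int q hq) hq, hν q hq, sub_self, add_zero,
          integral_sub (integrable_const _) hlogφ, integral_const, probReal_univ, one_smul]
    _ ≤ ∫ x, Real.log ((∑ i, f (τ i x)) / f x) ∂ν :=
        integral_mono (hmain.add hcob) (((hf.sum_comp hτ).div hf).integrable_log ν)
          (le_log_sum_comp_div hφ.pos hh.pos hρ heig hf.pos)

theorem stmt12_general {d : ℕ} (τ : Fin d → unitInterval → unitInterval)
    (hτ : ∀ i, Continuous (τ i))
    (φ : unitInterval → ℝ) (hφ : MemBplus φ)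
    (ρ : ℝ) (hρ : 0 < ρ) (h : unitInterval → ℝ) (hh : MemBplus h)
    (heig : ∀ x, (∑ i : Fin d, φ (τ i x) * h (τ i x)) = ρ * h x)
    (u : Fin d → unitInterval → ℝ)
    (hu : ∀ i x, u i x = φ (τ i x) * h (τ i x) / (ρ * h x))
    (nuhat₀ : Measure (unitInterval × (ℕ → Fin d))) [IsProbabilityMeasure nuhat₀]
    (hproj : ∀ f : C(unitInterval, ℝ),
      (∫ x, ∑ i : Fin d, u i x * f (τ i x) ∂(Measure.map Prod.fst nuhat₀))
        = ∫ x, f x ∂(Measure.map Prod.fst nuhat₀)) :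
    entropy τ nuhat₀ + (∫ p, Real.log (φ p.1) ∂nuhat₀) = Real.log ρ := by
  obtain rfl : u = normalizedWeight τ φ h ρ := funext fun i => funext (hu i)
  have hτm : ∀ i, Measurable (τ i) := fun i => (hτ i).measurable
  set ν := nuhat₀.map Prod.fst
  have : IsProbabilityMeasure ν := Measure.isProbabilityMeasure_map measurable_fst.aemeasurable
  have hu0 : ∀ i, 0 ≤ normalizedWeight τ φ h ρ i := fun i x =>
    (normalizedWeight_pos hφ.pos hh.pos hρ i x).le
  have hu_int : ∀ i, Integrable (normalizedWeight τ φ h ρ i) ν := fun i =>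
    .of_mem_Icc 0 1 (measurable_normalizedWeight hτm hφ.1 hh.1 i).aemeasurable <|
      ae_of_all _ fun x => ⟨hu0 i x, normalizedWeight_le_one hφ.pos hh.pos hρ heig i x⟩
  have hinv : ∀ f : unitInterval →ᵇ ℝ, ∫ x, transferOp (normalizedWeight τ φ h ρ) τ f x ∂ν =
      ∫ x, f x ∂ν := fun f => hproj f.toContinuousMap
  have hleast := isLeast_integral_log_sum_comp_div hτm hφ hh hρ heig
    (fun _ => integrable_transferOp hu_int hu0 hτm hinv)
    (fun _ => integral_transferOp hu_int hu0 hτm hinv)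
  have hlogφ : ∫ x, Real.log (φ x) ∂ν = ∫ p, Real.log (φ p.1) ∂nuhat₀ :=
    integral_map measurable_fst.aemeasurable (Real.measurable_log.comp hφ.1).aestronglyMeasurable
  rw [entropy_eq_sInf_integral_map_fst hτm, hleast.csInf_eq, hlogφ]
  ring

theorem stmt12 {d : ℕ} (hd : 1 ≤ d) (τ : Fin d → unitInterval → unitInterval)
    (hτ : ∀ i, Continuous (τ i))
    (φ : unitInterval → ℝ) (hφ : MemBplus φ)
    (ρ : ℝ) (hρ : 0 < ρ) (h : unitInterval → ℝ) (hh : MemBplus h)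
    (heig : ∀ x, (∑ i : Fin d, φ (τ i x) * h (τ i x)) = ρ * h x)
    (u : Fin d → unitInterval → ℝ)
    (hu : ∀ i x, u i x = φ (τ i x) * h (τ i x) / (ρ * h x))
    (nuhat₀ : Measure (unitInterval × (ℕ → Fin d))) [IsProbabilityMeasure nuhat₀]
    (hhol : IsHolonomic τ nuhat₀)
    (hproj : ∀ f : C(unitInterval, ℝ),
      (∫ x, ∑ i : Fin d, u i x * f (τ i x) ∂(Measure.map Prod.fst nuhat₀))
        = ∫ x, f x ∂(Measure.map Prod.fst nuhat₀)) :
    entropy τ nuhat₀ + (∫ p, Real.log (φ p.1) ∂nuhat₀) = Real.log ρ :=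
  stmt12_general τ hτ φ hφ ρ hρ h hh heig u hu nuhat₀ hproj
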